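/- Let (X, m) be a measure space, H a separable real Hilbert space and 1 < p < ∞. For u, φ ∈ L^p(m; H) the function t ↦ ∫_X ‖u(x) + tφ(x)‖_H^p m(dx) is differentiable at t = 0 with derivative p ∫_X ‖u(x)‖_H^{p−2} ⟨u(x), φ(x)⟩_H m(dx), where the integrand is interpreted as 0 at points x with u(x) = 0. -/

import Mathlib

open MeasureTheory
open scoped Classical

/-!
For each `x`, `t ↦ ‖u x + t • φ x‖ ^ p` has derivative `p ‖v‖ ^ (p - 2) ⟪v, φ x⟫` at
`v = u x + t • φ x`, which by Cauchy–Schwarz is bounded for `|t| < 1` by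
`p (‖u x‖ + ‖φ x‖) ^ (p - 1) ‖φ x‖`. This bound is integrable by Hölder's inequality, since
`‖·‖ ^ (p - 1)` maps `L^p` into `L^(p / (p - 1))`, so one may differentiate under the integral.
At `u x = 0` the integrand vanishes whatever junk value `‖0‖ ^ (p - 2)` takes, which accounts for
the `if` in the statement.
-/

section InnerProductSpace

variable {H : Type*} [NormedAddCommGroup H] [InnerProductSpace ℝ H]

theorem hasDerivAt_norm_add_smul_rpow (v w : H) {p : ℝ} (hp : 1 < p) (t : ℝ) :
    HasDerivAt (fun s : ℝ => ‖v + s • w‖ ^ p)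
      (p * ‖v + t • w‖ ^ (p - 2) * inner ℝ (v + t • w) w) t := by
  have hline : HasDerivAt (fun s : ℝ => v + s • w) w t := by
    simpa using ((hasDerivAt_id t).smul_const w).const_add v
  simpa only [Function.comp_def, smul_apply, innerSL_apply_apply,
    smul_eq_mul] using (hasFDerivAt_norm_rpow (v + t • w) hp).comp_hasDerivAt t hline

theorem abs_rpow_sub_two_mul_inner_le (p : ℝ) (v w : H) :
    |‖v‖ ^ (p - 2) * inner ℝ v w| ≤ ‖v‖ ^ (p - 1) * ‖w‖ := by
  rcases eq_or_ne v 0 with rfl | hv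
  · simp only [inner_zero_left, mul_zero, abs_zero]
    positivity
  calc |‖v‖ ^ (p - 2) * inner ℝ v w| = ‖v‖ ^ (p - 2) * |inner ℝ v w| := by
        rw [abs_mul, abs_of_nonneg (by positivity)]
    _ ≤ ‖v‖ ^ (p - 2) * (‖v‖ * ‖w‖) := by gcongr; exact abs_real_inner_le_norm v w
    _ = ‖v‖ ^ (p - 1) * ‖w‖ := by
        rw [← mul_assoc, ← Real.rpow_add_one (norm_ne_zero_iff.2 hv)]
        ring_nf

end InnerProductSpace

theorem MeasureTheory.MemLp.integrable_norm_rpow_sub_one_mul_norm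
    {X E F : Type*} [MeasurableSpace X] {m : Measure X}
    [NormedAddCommGroup E] [NormedAddCommGroup F] {f : X → E} {g : X → F} {p : ℝ} (hp : 1 < p)
    (hf : MemLp f (ENNReal.ofReal p) m) (hg : MemLp g (ENNReal.ofReal p) m) :
    Integrable (fun x => ‖f x‖ ^ (p - 1) * ‖g x‖) m := by
  have : ENNReal.HolderConjugate (ENNReal.ofReal (p / (p - 1))) (ENNReal.ofReal p) :=
    (Real.HolderConjugate.conjExponent hp).symm.ennrealOfReal
  have hf' : MemLp (fun x => ‖f x‖ ^ (p - 1)) (ENNReal.ofReal (p / (p - 1))) m := by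
    have h := hf.norm_rpow_div (ENNReal.ofReal (p - 1))
    rwa [ENNReal.toReal_ofReal (by linarith), ← ENNReal.ofReal_div_of_pos (by linarith)] at h
  exact hf'.integrable_mul hg.norm

theorem norm_add_smul_le_of_mem_ball {E : Type*} [SeminormedAddCommGroup E] [NormedSpace ℝ E]
    (v w : E) {t : ℝ} (ht : t ∈ Metric.ball (0 : ℝ) 1) : ‖v + t • w‖ ≤ ‖v‖ + ‖w‖ := by
  have ht1 : ‖t‖ ≤ 1 := (mem_ball_zero_iff.1 ht).le
  calc ‖v + t • w‖ ≤ ‖v‖ + ‖t‖ * ‖w‖ := (norm_add_le _ _).trans_eq (by rw [norm_smul])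
    _ ≤ ‖v‖ + ‖w‖ := by gcongr; exact mul_le_of_le_one_left (norm_nonneg w) ht1

theorem hasDerivAt_integral_norm_add_smul_rpow
    {X H : Type*} [MeasurableSpace X] {m : Measure X} [NormedAddCommGroup H] [InnerProductSpace ℝ H]
    {u φ : X → H} {p : ℝ} (hp : 1 < p)
    (hu : MemLp u (ENNReal.ofReal p) m) (hφ : MemLp φ (ENNReal.ofReal p) m) :
    HasDerivAt (fun t : ℝ => ∫ x, ‖u x + t • φ x‖ ^ p ∂m)
      (∫ x, p * ‖u x‖ ^ (p - 2) * inner ℝ (u x) (φ x) ∂m) 0 := by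
  have hp0 : 0 < p := zero_lt_one.trans hp
  have hline (t : ℝ) : AEStronglyMeasurable (fun x => u x + t • φ x) m :=
    hu.1.add (hφ.1.const_smul t)
  have hF_meas (t : ℝ) : AEStronglyMeasurable (fun x => ‖u x + t • φ x‖ ^ p) m :=
    ((hline t).norm.aemeasurable.pow_const p).aestronglyMeasurable
  have hF_int : Integrable (fun x => ‖u x + (0 : ℝ) • φ x‖ ^ p) m := by
    simpa [ENNReal.toReal_ofReal hp0.le] using
      hu.integrable_norm_rpow (by simpa using hp0) ENNReal.ofReal_ne_top
  have hF'_meas : AEStronglyMeasurable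
      (fun x => p * ‖u x + (0 : ℝ) • φ x‖ ^ (p - 2) * inner ℝ (u x + (0 : ℝ) • φ x) (φ x)) m :=
    ((((hline 0).norm.aemeasurable.pow_const (p - 2)).const_mul p).aestronglyMeasurable).mul
      ((hline 0).inner hφ.1)
  have h_bound : ∀ᵐ x ∂m, ∀ t ∈ Metric.ball (0 : ℝ) 1,
      ‖p * ‖u x + t • φ x‖ ^ (p - 2) * inner ℝ (u x + t • φ x) (φ x)‖
        ≤ p * ((‖u x‖ + ‖φ x‖) ^ (p - 1) * ‖φ x‖) := by
    refine .of_forall fun x t ht => ?_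
    rw [mul_assoc, norm_mul, Real.norm_of_nonneg hp0.le, Real.norm_eq_abs]
    gcongr
    refine (abs_rpow_sub_two_mul_inner_le p _ _).trans ?_
    gcongr
    exact norm_add_smul_le_of_mem_ball _ _ ht
  have h_bound_int : Integrable (fun x => p * ((‖u x‖ + ‖φ x‖) ^ (p - 1) * ‖φ x‖)) m := by
    refine (MemLp.integrable_norm_rpow_sub_one_mul_norm hp (hu.norm.add hφ.norm) hφ).const_mul p
      |>.congr (.of_forall fun x => ?_)
    dsimp only [Pi.add_apply]
    rw [Real.norm_of_nonneg (by positivity)]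
  simpa using (hasDerivAt_integral_of_dominated_loc_of_deriv_le (Metric.ball_mem_nhds 0 one_pos)
    (.of_forall hF_meas) hF_int hF'_meas h_bound h_bound_int
    (.of_forall fun x t _ => hasDerivAt_norm_add_smul_rpow (u x) (φ x) hp t)).2

theorem hasDerivAt_Lp_norm_pow_integral_general
    {X H : Type*} [MeasurableSpace X] (m : Measure X)
    [NormedAddCommGroup H] [InnerProductSpace ℝ H]
    (p : ℝ) (hp1 : 1 < p)
    (u φ : Lp H (ENNReal.ofReal p) m) :
    HasDerivAt (fun t : ℝ => ∫ x, ‖u x + t • φ x‖ ^ p ∂m)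
      (p * ∫ x, (if u x = 0 then (0 : ℝ)
        else ‖u x‖ ^ (p - 2) * (inner ℝ (u x) (φ x) : ℝ)) ∂m) 0 := by
  convert hasDerivAt_integral_norm_add_smul_rpow hp1 (Lp.memLp u) (Lp.memLp φ) using 1
  rw [← integral_const_mul]
  congr 1 with x
  split_ifs with hu0 <;> simp [hu0, mul_assoc]

theorem hasDerivAt_Lp_norm_pow_integral
    {X H : Type*} [MeasurableSpace X] (m : Measure X)
    [NormedAddCommGroup H] [InnerProductSpace ℝ H]
    [TopologicalSpace.SeparableSpace H]
    (p : ℝ) (hp1 : 1 < p) [Fact (1 ≤ ENNReal.ofReal p)]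
    (u φ : Lp H (ENNReal.ofReal p) m) :
    HasDerivAt (fun t : ℝ => ∫ x, ‖u x + t • φ x‖ ^ p ∂m)
      (p * ∫ x, (if u x = 0 then (0 : ℝ)
        else ‖u x‖ ^ (p - 2) * (inner ℝ (u x) (φ x) : ℝ)) ∂m) 0 :=
  hasDerivAt_Lp_norm_pow_integral_general m p hp1 u φ
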